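/- Every k-uniform intersecting family F on a finite set X with covering number τ(F) = k (with k ≥ 1) has maximum degree Δ(F) ≤ k^(k-1); that is, every vertex x ∈ X is contained in at most k^(k-1) members of F. -/

import Mathlib

/-- A family of finite sets is intersecting if any two members intersect. -/
def IntersectingFamily {α : Type} [DecidableEq α] (F : Finset (Finset α)) : Prop :=
  ∀ f ∈ F, ∀ g ∈ F, (f ∩ g).Nonempty

/-- The covering number: the least size of a set meeting every member of `F`. -/
noncomputable def coverNum {α : Type} [DecidableEq α] (F : Finset (Finset α)) : ℕ :=
  sInf {n : ℕ | ∃ C : Finset α, C.card = n ∧ ∀ f ∈ F, (f ∩ C).Nonempty}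

/-- The degree of a vertex: the number of members of `F` containing it. -/
def degVert {α : Type} [DecidableEq α] (F : Finset (Finset α)) (x : α) : ℕ :=
  (F.filter fun f => x ∈ f).card

/-- The degree of a set: the number of members of `F` containing it. -/
def degSet {α : Type} [DecidableEq α] (F : Finset (Finset α)) (S : Finset α) : ℕ :=
  (F.filter fun f => S ⊆ f).card

private lemma degSet_le_pow {α : Type} [DecidableEq α] (k : ℕ)
    (F : Finset (Finset α)) (huni : ∀ f ∈ F, f.card = k)
    (hint : IntersectingFamily F)
    (hcov : ∀ C : Finset α, (∀ f ∈ F, (f ∩ C).Nonempty) → k ≤ C.card) :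
    ∀ m : ℕ, ∀ S : Finset α, k - S.card ≤ m → degSet F S ≤ k ^ (k - S.card) := by
  intro m
  induction m with
  | zero =>
      intro S hS
      have hks : k ≤ S.card := Nat.le_of_sub_eq_zero (Nat.le_zero.mp hS)
      have : degSet F S ≤ 1 := by
        unfold degSet
        apply Finset.card_le_one.mpr
        intro f hf g hg
        simp only [Finset.mem_filter] at hf hg
        have hf' : S = f := Finset.eq_of_subset_of_card_le hf.2 (by rw [huni f hf.1]; exact hks)
        have hg' : S = g := Finset.eq_of_subset_of_card_le hg.2 (by rw [huni g hg.1]; exact hks)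
        rw [← hf', ← hg']
      simpa [Nat.sub_eq_zero_of_le hks] using this
  | succ m ih =>
      intro S hS
      by_cases hks : k ≤ S.card
      · exact ih S (by omega)
      push_neg at hks
      -- S is not a cover, so some f ∈ F misses S
      have : ¬ (∀ f ∈ F, (f ∩ S).Nonempty) := fun h => absurd (hcov S h) (by omega)
      push_neg at this
      obtain ⟨f, hfF, hfS⟩ := this
      -- every member containing S contains some y ∈ f
      have hsub : F.filter (fun g => S ⊆ g) ⊆
          f.biUnion (fun y => F.filter (fun g => insert y S ⊆ g)) := by
        intro g hg
        simp only [Finset.mem_filter] at hg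
        obtain ⟨y, hy⟩ := hint f hfF g hg.1
        simp only [Finset.mem_inter] at hy
        refine Finset.mem_biUnion.mpr ⟨y, hy.1, ?_⟩
        simp only [Finset.mem_filter]
        exact ⟨hg.1, Finset.insert_subset hy.2 hg.2⟩
      have hcard : degSet F S ≤ ∑ y ∈ f, degSet F (insert y S) :=
        le_trans (Finset.card_le_card hsub) (Finset.card_biUnion_le)
      have hbound : ∀ y ∈ f, degSet F (insert y S) ≤ k ^ (k - S.card - 1) := by
        intro y hy
        have hyS : y ∉ S := by
          intro h
          have : y ∈ f ∩ S := Finset.mem_inter.mpr ⟨hy, h⟩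
          simp [hfS] at this
        have hc : (insert y S).card = S.card + 1 := Finset.card_insert_of_notMem hyS
        have := ih (insert y S) (by omega)
        rwa [hc, show k - (S.card + 1) = k - S.card - 1 by omega] at this
      calc degSet F S ≤ ∑ y ∈ f, degSet F (insert y S) := hcard
        _ ≤ ∑ _y ∈ f, k ^ (k - S.card - 1) := Finset.sum_le_sum hbound
        _ = k * k ^ (k - S.card - 1) := by
            rw [Finset.sum_const, huni f hfF, smul_eq_mul]
        _ = k ^ (k - S.card) := by
            rw [← pow_succ']
            congr 1
            omega

/-- every vertex has degree at most `k^(k-1)`. -/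
theorem max_degree_le {α : Type} [DecidableEq α] (k : ℕ) (hk : 1 ≤ k)
    (X : Finset α) (F : Finset (Finset α))
    (hX : ∀ f ∈ F, f ⊆ X) (huni : ∀ f ∈ F, f.card = k)
    (hint : IntersectingFamily F) (hcov : coverNum F = k) :
    ∀ x ∈ X, degVert F x ≤ k ^ (k - 1) := by
  intro x _
  have hcov' : ∀ C : Finset α, (∀ f ∈ F, (f ∩ C).Nonempty) → k ≤ C.card := by
    intro C hC
    have : coverNum F ≤ C.card := Nat.sInf_le ⟨C, rfl, hC⟩
    omega
  have hdeg : degVert F x = degSet F {x} := by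
    unfold degVert degSet
    congr 1
    apply Finset.filter_congr
    intro g _
    simp [Finset.singleton_subset_iff]
  have := degSet_le_pow k F huni hint hcov' k {x} (by simp)
  simpa [hdeg] using this
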